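/- For every r ∈ (0,1), the mean total time spent at the origin by the reset Pólya walk grows linearly with amplitude A = √(r/(2−r)); that is, E[N×_t + N•_t]/t converges to √(r/(2−r)) as t → ∞ (equivalently, since E[N•_t] = r·t exactly for all t, E[N×_t]/t → √(r/(2−r)) − r). -/

import Mathlib

open Finset Filter

namespace ResetPolya

/-- Probability weight of an outcome of the reset Pólya walk with horizon `t`:
independently at each step, the reset indicator is `true` with probability `r`,
and the ±1 step is chosen with probability 1/2 each. -/
noncomputable def wt (r : ℝ) {t : ℕ} (ω : Fin t → Bool × Bool) : ℝ :=
  ∏ k : Fin t, ((if (ω k).1 then r else 1 - r) * (1 / 2))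

/-- Position of the reset Pólya walk: `x_0 = 0`; at step `k+1`, the walker is reset
to the origin if the reset indicator holds, otherwise it moves by ±1. -/
def pos {t : ℕ} (ω : Fin t → Bool × Bool) : ℕ → ℤ
  | 0 => 0
  | k + 1 =>
    if h : k < t then
      if (ω ⟨k, h⟩).1 then 0
      else pos ω k + (if (ω ⟨k, h⟩).2 then 1 else -1)
    else pos ω k

/-- Number of resetting events up to time `t`. -/
def Ndot {t : ℕ} (ω : Fin t → Bool × Bool) : ℕ :=
  (Finset.univ.filter fun k : Fin t => (ω k).1 = true).card

/-- Number of spontaneous returns to the origin up to time `t`. -/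
def Ncross {t : ℕ} (ω : Fin t → Bool × Bool) : ℕ :=
  (Finset.univ.filter fun k : Fin t => (ω k).1 = false ∧ pos ω (k.1 + 1) = 0).card

/-- Expectation of an observable of the reset Pólya walk with horizon `t`. -/
noncomputable def expect (r : ℝ) (t : ℕ) (f : (Fin t → Bool × Bool) → ℝ) : ℝ :=
  ∑ ω : Fin t → Bool × Bool, wt r ω * f ω

open scoped Classical in
/-- Probability of an event for the reset Pólya walk with horizon `t`. -/
noncomputable def prob (r : ℝ) (t : ℕ) (E : (Fin t → Bool × Bool) → Prop) : ℝ :=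
  expect r t fun ω => if E ω then 1 else 0

end ResetPolya

open ResetPolya Filter

/-!
`N×_t + N•_t` counts the times `k ≤ t` with `x_k = 0`, so its mean is `∑_{k ≤ t} P(x_k = 0)`.
Splitting at the last reset, `P(x_n = 0) = r ∑_{m<n} (1-r)^m p_m + (1-r)^n p_n`, where `p_m` is
the probability that simple random walk is at the origin at time `m`; `p_{2j} = C(2j,j)/4^j`
and `p_{2j+1} = 0`. The binomial series of `(1 - z)^(-1/2)` then gives
`P(x_n = 0) → r ∑_j C(2j,j)/4^j (1-r)^{2j} = r / √(1 - (1-r)^2) = √(r/(2-r))`,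
and the Cesàro mean has the same limit.
-/

open scoped Topology

lemma multichoose_inv_two_eq_centralBinom_div (n : ℕ) :
    Ring.multichoose (2⁻¹ : ℝ) n = (Nat.centralBinom n : ℝ) / 4 ^ n := by
  have hfac : ∀ n : ℕ, (n.factorial : ℝ) * Ring.multichoose (2⁻¹ : ℝ) n
      = (ascPochhammer ℝ n).eval (2⁻¹ : ℝ) := by
    intro n
    rw [← Polynomial.ascPochhammer_smeval_eq_eval,
      ← Ring.factorial_nsmul_multichoose_eq_ascPochhammer, nsmul_eq_mul]
  induction n with
  | zero => simp
  | succ n ih =>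
    have h := hfac (n + 1)
    rw [ascPochhammer_succ_eval, ← hfac n, ih, Nat.factorial_succ] at h
    have hc : ((n : ℝ) + 1) * Nat.centralBinom (n + 1) = 2 * (2 * n + 1) * Nat.centralBinom n := by
      exact_mod_cast Nat.succ_mul_centralBinom_succ n
    apply mul_left_cancel₀ (show ((n : ℝ) + 1) * n.factorial ≠ 0 by positivity)
    push_cast at h
    rw [h, pow_succ]
    linear_combination (-(n.factorial : ℝ) / (4 ^ n * 4)) * hc

lemma hasSum_centralBinom_div_four_pow {z : ℝ} (hz : |z| < 1) :
    HasSum (fun n => (Nat.centralBinom n : ℝ) / 4 ^ n * z ^ n) (1 / Real.sqrt (1 - z)) := by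
  have h := (Real.one_div_one_sub_rpow_hasFPowerSeriesOnBall_zero (1 / 2)).hasSum
    (y := z) (by simpa [enorm_eq_nnnorm, ← NNReal.coe_lt_coe] using hz)
  simpa [FormalMultilinearSeries.ofScalars, ← Ring.multichoose_eq, multichoose_inv_two_eq_centralBinom_div,
    Real.sqrt_eq_rpow] using h

lemma sum_range_choose_ite_succ (n : ℕ) (x : ℤ) :
    ∑ k ∈ range (n + 2), (if ((n + 1 : ℕ) : ℤ) - 2 * k = x then ((n + 1).choose k : ℝ) else 0) =
      (∑ k ∈ range (n + 1), if (n : ℤ) - 2 * k = x - 1 then (n.choose k : ℝ) else 0) +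
        ∑ k ∈ range (n + 1), if (n : ℤ) - 2 * k = x + 1 then (n.choose k : ℝ) else 0 := by
  set G : ℕ → ℤ → ℕ → ℝ := fun m y k => if (m : ℤ) - 2 * k = y then (m.choose k : ℝ) else 0
  have hpascal : ∀ k, G (n + 1) x (k + 1) = G n (x - 1) (k + 1) + G n (x + 1) k := by
    intro k
    simp only [G, Nat.choose_succ_succ', Nat.cast_add, Nat.cast_one]
    split_ifs <;> first | omega | ring
  change ∑ k ∈ range (n + 2), G (n + 1) x k = ∑ k ∈ range (n + 1), G n (x - 1) k +
    ∑ k ∈ range (n + 1), G n (x + 1) k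
  rw [sum_range_succ', sum_congr rfl fun k _ => hpascal k, sum_add_distrib, add_right_comm]
  congr 1
  have hzero : G (n + 1) x 0 = G n (x - 1) 0 := by
    simp only [G, Nat.choose_zero_right, Nat.cast_zero, mul_zero, sub_zero, Nat.cast_add,
      Nat.cast_one, eq_sub_iff_add_eq]
  rw [hzero, ← sum_range_succ' (G n (x - 1)) (n + 1), sum_range_succ, add_eq_left]
  simp [G, Nat.choose_succ_self]

noncomputable def srwProb : ℕ → ℤ → ℝ
  | 0, x => if x = 0 then 1 else 0
  | n + 1, x => (srwProb n (x - 1) + srwProb n (x + 1)) / 2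

lemma srwProb_nonneg (n : ℕ) (x : ℤ) : 0 ≤ srwProb n x := by
  induction n generalizing x with
  | zero => unfold srwProb; positivity
  | succ n ih => unfold srwProb; linarith [ih (x - 1), ih (x + 1)]

lemma srwProb_le_one (n : ℕ) (x : ℤ) : srwProb n x ≤ 1 := by
  induction n generalizing x with
  | zero => unfold srwProb; split_ifs <;> norm_num
  | succ n ih => unfold srwProb; linarith [ih (x - 1), ih (x + 1)]

lemma srwProb_eq_sum (n : ℕ) (x : ℤ) :
    srwProb n x =
      (∑ k ∈ range (n + 1), if (n : ℤ) - 2 * k = x then (n.choose k : ℝ) else 0) / 2 ^ n := by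
  induction n generalizing x with
  | zero => simp [srwProb, eq_comm]
  | succ n ih =>
    rw [srwProb, ih, ih, sum_range_choose_ite_succ, pow_succ]
    ring

lemma srwProb_two_mul_zero (j : ℕ) : srwProb (2 * j) 0 = (Nat.centralBinom j : ℝ) / 4 ^ j := by
  rw [srwProb_eq_sum, sum_eq_single j]
  · rw [if_pos (by push_cast; ring), Nat.centralBinom_eq_two_mul_choose, pow_mul]
    norm_num
  · intro k _ hk
    rw [if_neg (by omega)]
  · intro hj
    exact absurd (mem_range.2 (by omega)) hj

lemma srwProb_two_mul_add_one_zero (j : ℕ) : srwProb (2 * j + 1) 0 = 0 := by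
  rw [srwProb_eq_sum, sum_eq_zero fun k _ => if_neg (by omega), zero_div]

lemma hasSum_pow_mul_srwProb_zero {s : ℝ} (hs : |s| < 1) :
    HasSum (fun m => s ^ m * srwProb m 0) (1 / Real.sqrt (1 - s ^ 2)) := by
  have heven : HasSum (fun j => s ^ (2 * j) * srwProb (2 * j) 0) (1 / Real.sqrt (1 - s ^ 2)) := by
    have h := hasSum_centralBinom_div_four_pow (z := s ^ 2) (by
      rw [abs_pow, sq_lt_one_iff₀ (abs_nonneg s)]; exact hs)
    refine h.congr_fun fun j => ?_
    rw [srwProb_two_mul_zero, pow_mul]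
    ring
  have hodd : HasSum (fun j => s ^ (2 * j + 1) * srwProb (2 * j + 1) 0) 0 := by
    simp only [srwProb_two_mul_add_one_zero, mul_zero]
    exact hasSum_zero
  simpa only [add_zero] using HasSum.even_add_odd (f := fun m => s ^ m * srwProb m 0) heven hodd

namespace ResetPolya

variable {r : ℝ}

noncomputable def stepWt (r : ℝ) (b : Bool × Bool) : ℝ := (if b.1 then r else 1 - r) * (1 / 2)

lemma sum_stepWt (r : ℝ) : ∑ b : Bool × Bool, stepWt r b = 1 := by
  simp only [stepWt, Fintype.sum_prod_type, Fintype.sum_bool, if_true, Bool.false_eq_true,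
    if_false]
  ring

lemma sum_wt (t : ℕ) : ∑ ω : Fin t → Bool × Bool, wt r ω = 1 :=
  calc ∑ ω : Fin t → Bool × Bool, wt r ω = ∑ ω : Fin t → Bool × Bool, ∏ k, stepWt r (ω k) := rfl
    _ = ∏ _k : Fin t, ∑ b, stepWt r b := (Fintype.prod_sum _).symm
    _ = 1 := by simp only [sum_stepWt, prod_const_one]

lemma wt_snoc {t : ℕ} (ω : Fin t → Bool × Bool) (b : Bool × Bool) :
    wt r (Fin.snoc ω b) = wt r ω * stepWt r b := by
  simp [wt, stepWt, Fin.prod_univ_castSucc]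

lemma expect_succ {t : ℕ} (f : (Fin (t + 1) → Bool × Bool) → ℝ) :
    expect r (t + 1) f = expect r t fun ω => ∑ b, stepWt r b * f (Fin.snoc ω b) := by
  rw [expect, ← (Fin.snocEquiv fun _ => Bool × Bool).sum_comp, Fintype.sum_prod_type,
    sum_comm]
  simp only [expect, mul_sum]
  refine sum_congr rfl fun ω _ => sum_congr rfl fun b _ => ?_
  change wt r (Fin.snoc ω b) * f (Fin.snoc ω b) = _
  rw [wt_snoc]
  ring

lemma expect_add {t : ℕ} (f g : (Fin t → Bool × Bool) → ℝ) :
    expect r t (fun ω => f ω + g ω) = expect r t f + expect r t g := by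
  simp only [expect, mul_add, sum_add_distrib]

lemma expect_const_mul {t : ℕ} (c : ℝ) (f : (Fin t → Bool × Bool) → ℝ) :
    expect r t (fun ω => c * f ω) = c * expect r t f := by
  simp only [expect, mul_sum, mul_left_comm]

lemma expect_const (t : ℕ) (c : ℝ) : expect r t (fun _ => c) = c := by
  rw [expect, ← sum_mul, sum_wt, one_mul]

lemma expect_sum {t m : ℕ} (f : Fin m → (Fin t → Bool × Bool) → ℝ) :
    expect r t (fun ω => ∑ i, f i ω) = ∑ i, expect r t (f i) := by
  simp only [expect, mul_sum]
  exact sum_comm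

lemma pos_succ {t : ℕ} (ω : Fin t → Bool × Bool) {k : ℕ} (h : k < t) :
    pos ω (k + 1) =
      if (ω ⟨k, h⟩).1 then 0 else pos ω k + (if (ω ⟨k, h⟩).2 then 1 else -1) := by
  simp [pos, h]

lemma pos_snoc {t : ℕ} (ω : Fin t → Bool × Bool) (b : Bool × Bool) {k : ℕ} (hk : k ≤ t) :
    pos (Fin.snoc ω b) k = pos ω k := by
  induction k with
  | zero => rfl
  | succ k ih =>
    have hkt : k < t := hk
    rw [pos_succ _ (by omega), pos_succ _ hkt, ih hkt.le]
    simp [Fin.snoc, hkt]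

lemma pos_snoc_last {t : ℕ} (ω : Fin t → Bool × Bool) (b : Bool × Bool) :
    pos (Fin.snoc ω b) (t + 1) = if b.1 then 0 else pos ω t + (if b.2 then 1 else -1) := by
  rw [pos_succ _ t.lt_succ_self, pos_snoc ω b le_rfl]
  simp [Fin.snoc]

lemma pos_eq_zero_of_reset {t : ℕ} (ω : Fin t → Bool × Bool) {k : Fin t} (hk : (ω k).1) :
    pos ω (k + 1) = 0 := by
  simp [pos_succ ω k.isLt, hk]

lemma Ndot_snoc {t : ℕ} (ω : Fin t → Bool × Bool) (b : Bool × Bool) :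
    (Ndot (Fin.snoc ω b) : ℝ) = Ndot ω + if b.1 then 1 else 0 := by
  simp only [Ndot, card_filter, Fin.sum_univ_castSucc, Fin.snoc_castSucc, Fin.snoc_last]
  push_cast
  rfl

lemma expect_Ndot (t : ℕ) : expect r t (fun ω => (Ndot ω : ℝ)) = r * t := by
  induction t with
  | zero => simp [Ndot, expect_const]
  | succ t ih =>
    have hstep : ∀ ω : Fin t → Bool × Bool,
        ∑ b, stepWt r b * (Ndot (Fin.snoc ω b) : ℝ) = Ndot ω + r := by
      intro ω
      simp only [Ndot_snoc, stepWt, Fintype.sum_prod_type, Fintype.sum_bool, if_true,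
        Bool.false_eq_true, if_false]
      ring
    rw [expect_succ]
    simp only [hstep]
    rw [expect_add, expect_const, ih]
    push_cast
    ring

lemma Ncross_add_Ndot {t : ℕ} (ω : Fin t → Bool × Bool) :
    Ncross ω + Ndot ω = #{k : Fin t | pos ω (k + 1) = 0} := by
  rw [Ncross, Ndot, ← card_union_of_disjoint]
  · congr 1
    ext k
    by_cases hk : (ω k).1 <;> simp [hk, pos_eq_zero_of_reset]
  · exact disjoint_filter.2 fun k _ h1 h2 => by simp_all

noncomputable def posProb (r : ℝ) (n : ℕ) (x : ℤ) : ℝ :=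
  expect r n fun ω => if pos ω n = x then 1 else 0

lemma expect_ite_pos_eq_posProb {t n : ℕ} (hn : n ≤ t) (x : ℤ) :
    expect r t (fun ω => if pos ω n = x then 1 else 0) = posProb r n x := by
  induction t with
  | zero =>
    obtain rfl : n = 0 := by omega
    rfl
  | succ t ih =>
    rcases hn.eq_or_lt with rfl | hlt
    · rfl
    rw [expect_succ, ← ih (by omega)]
    congr 1
    ext ω
    simp only [pos_snoc ω _ (show n ≤ t by omega), ← sum_mul, sum_stepWt, one_mul]

lemma posProb_zero (x : ℤ) : posProb r 0 x = if x = 0 then 1 else 0 := by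
  simp [posProb, pos, expect_const, eq_comm]

lemma posProb_succ (n : ℕ) (x : ℤ) :
    posProb r (n + 1) x =
      r * (if x = 0 then 1 else 0) + (1 - r) * ((posProb r n (x - 1) + posProb r n (x + 1)) / 2) := by
  have hstep : ∀ ω : Fin n → Bool × Bool,
      ∑ b, stepWt r b * (if pos (Fin.snoc ω b) (n + 1) = x then 1 else 0) =
        r * (if x = 0 then 1 else 0) + (1 - r) / 2 * (if pos ω n = x - 1 then 1 else 0)
          + (1 - r) / 2 * (if pos ω n = x + 1 then 1 else 0) := by
    intro ω
    simp only [pos_snoc_last, stepWt, Fintype.sum_prod_type, Fintype.sum_bool, if_true,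
      Bool.false_eq_true, if_false, eq_comm (a := (0 : ℤ)), sub_neg_eq_add,
      ← eq_sub_iff_add_eq]
    ring
  rw [posProb, expect_succ]
  simp only [hstep]
  rw [expect_add, expect_add, expect_const, expect_const_mul, expect_const_mul, posProb, posProb]
  ring

/- `m` is the time elapsed since the last reset, after which the walker performs a simple random
walk; the last term accounts for the paths without any reset. -/
lemma posProb_eq_sum_srwProb (n : ℕ) (x : ℤ) :
    posProb r n x = r * ∑ m ∈ range n, (1 - r) ^ m * srwProb m x + (1 - r) ^ n * srwProb n x := by
  induction n generalizing x with
  | zero => simp [posProb_zero, srwProb]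
  | succ n ih =>
    have hshift : ∑ m ∈ range n, (1 - r) ^ (m + 1) * srwProb (m + 1) x =
        (1 - r) / 2 * (∑ m ∈ range n, (1 - r) ^ m * srwProb m (x - 1) +
          ∑ m ∈ range n, (1 - r) ^ m * srwProb m (x + 1)) := by
      rw [← sum_add_distrib, mul_sum]
      refine sum_congr rfl fun m _ => ?_
      rw [srwProb, pow_succ]
      ring
    rw [posProb_succ, ih, ih, sum_range_succ', hshift, srwProb, srwProb, pow_succ]
    ring

lemma tendsto_posProb_zero (hr : |1 - r| < 1) :
    Tendsto (fun n => posProb r n 0) atTop (𝓝 (r / Real.sqrt (1 - (1 - r) ^ 2))) := by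
  have hremainder : Tendsto (fun n => (1 - r) ^ n * srwProb n 0) atTop (𝓝 0) := by
    refine squeeze_zero_norm (fun n => ?_)
      (tendsto_pow_atTop_nhds_zero_of_lt_one (abs_nonneg _) hr)
    rw [norm_mul, norm_pow, Real.norm_eq_abs, Real.norm_of_nonneg (srwProb_nonneg n 0)]
    exact mul_le_of_le_one_right (by positivity) (srwProb_le_one n 0)
  have hsum := ((hasSum_pow_mul_srwProb_zero hr).tendsto_sum_nat.const_mul r).add hremainder
  rw [mul_one_div, add_zero] at hsum
  exact hsum.congr fun n => (posProb_eq_sum_srwProb n 0).symm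

lemma expect_Ncross_add_Ndot (t : ℕ) :
    expect r t (fun ω => (Ncross ω : ℝ) + Ndot ω) = ∑ k ∈ range t, posProb r (k + 1) 0 := by
  have hcount : ∀ ω : Fin t → Bool × Bool, (Ncross ω : ℝ) + Ndot ω =
      ∑ k : Fin t, if pos ω (k + 1) = 0 then 1 else 0 := by
    intro ω
    rw [← Nat.cast_add, Ncross_add_Ndot, card_filter, Nat.cast_sum]
    simp only [Nat.cast_ite, Nat.cast_one, Nat.cast_zero]
  simp only [hcount]
  rw [expect_sum, ← Fin.sum_univ_eq_sum_range]
  exact sum_congr rfl fun k _ => expect_ite_pos_eq_posProb k.isLt 0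

end ResetPolya

/-- The mean total time spent at the origin by the reset Pólya walk grows linearly
with amplitude `A = √(r/(2−r))`; moreover `E[N•_t] = r·t` exactly for all `t`. -/
theorem statement4 (r : ℝ) (hr : r ∈ Set.Ioo (0 : ℝ) 1) :
    (∀ t : ℕ, expect r t (fun ω => (Ndot ω : ℝ)) = r * t) ∧
    Tendsto (fun t : ℕ => expect r t (fun ω => ((Ncross ω : ℝ) + (Ndot ω : ℝ))) / t)
      atTop (nhds (Real.sqrt (r / (2 - r)))) := by
  obtain ⟨hr0, hr1⟩ := hr
  refine ⟨expect_Ndot, ?_⟩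
  have hlim : r / Real.sqrt (1 - (1 - r) ^ 2) = Real.sqrt (r / (2 - r)) := by
    have h2r : 0 < 2 - r := by linarith
    rw [show 1 - (1 - r) ^ 2 = r * (2 - r) by ring, Real.sqrt_mul hr0.le, Real.sqrt_div' _ h2r.le]
    nth_rewrite 1 [← Real.mul_self_sqrt hr0.le]
    field_simp
  have hcesaro := ((tendsto_posProb_zero (r := r) (by rw [abs_lt]; constructor <;> linarith)).comp
    (tendsto_add_atTop_nat 1)).cesaro
  rw [hlim] at hcesaro
  refine hcesaro.congr fun t => ?_
  rw [expect_Ncross_add_Ndot, inv_mul_eq_div]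
  rfl
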